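/- For every n ≥ 0, standardization is a bijection from the set Prim_n of primitive modified ascent sequences of length n onto the set Ω_n of permutations of {1,…,n} that start with 1 and avoid the bivincular pattern ω. -/

import Mathlib

/-- A Cayley permutation of length `n`: a word whose set of values is `{1, …, k}`
for some `k ≤ n`. -/
def IsCayley {n : ℕ} (x : Fin n → ℕ) : Prop :=
  ∃ k, k ≤ n ∧ Set.range x = Set.Icc 1 k

/-- Ascent tops of `x`: indices `i` with `i = 0` or `x (i-1) < x i`. -/
def AscTops {n : ℕ} (x : Fin n → ℕ) : Set (Fin n) :=
  {i | ∀ j : Fin n, (j : ℕ) + 1 = (i : ℕ) → x j < x i}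

/-- Leftmost copies of `x`: indices `i` such that the value `x i` does not occur earlier. -/
def Nub {n : ℕ} (x : Fin n → ℕ) : Set (Fin n) :=
  {i | ∀ j : Fin n, j < i → x j ≠ x i}

/-- A modified ascent sequence: a Cayley permutation whose ascent tops
are exactly its leftmost copies. -/
def IsModasc {n : ℕ} (x : Fin n → ℕ) : Prop :=
  IsCayley x ∧ AscTops x = Nub x

/-- `x` has no flat steps (no two consecutive equal entries). -/
def NoFlat {n : ℕ} (x : Fin n → ℕ) : Prop :=
  ∀ i j : Fin n, (j : ℕ) = (i : ℕ) + 1 → x i ≠ x j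

/-- A primitive modified ascent sequence. -/
def IsPrim {n : ℕ} (x : Fin n → ℕ) : Prop :=
  IsModasc x ∧ NoFlat x

/-- The word `x` contains the pattern `y`. -/
def Contains {n k : ℕ} (x : Fin n → ℕ) (y : Fin k → ℕ) : Prop :=
  ∃ f : Fin k → Fin n, StrictMono f ∧ ∀ s t, y s < y t ↔ x (f s) < x (f t)

/-- The word `x` avoids the pattern `y`. -/
def Avoids {n k : ℕ} (x : Fin n → ℕ) (y : Fin k → ℕ) : Prop :=
  ¬ Contains x y

/-- Standardization: `(Std x) i = #{j : x j < x i} + #{j ≤ i : x j = x i}`. -/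
def Std {n : ℕ} (x : Fin n → ℕ) : Fin n → ℕ :=
  fun i => (Finset.univ.filter fun j => x j < x i).card +
    (Finset.univ.filter fun j => j ≤ i ∧ x j = x i).card

/-- `p` is a permutation of `{1, …, n}` (written as a word). -/
def IsPerm {n : ℕ} (p : Fin n → ℕ) : Prop :=
  Function.Injective p ∧ Set.range p = Set.Icc 1 n

/-- `p` contains the bivincular pattern `ω = (321, {1}, {1})`:
there are `i` and `j` with `i + 1 < j`, `p i > p (i+1)` and `p (i+1) = p j + 1`. -/
def ContainsOmega {n : ℕ} (p : Fin n → ℕ) : Prop :=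
  ∃ (i j : Fin n) (hi : (i : ℕ) + 1 < n),
    (i : ℕ) + 1 < (j : ℕ) ∧ p ⟨(i : ℕ) + 1, hi⟩ < p i ∧ p ⟨(i : ℕ) + 1, hi⟩ = p j + 1

/-- Membership in `Ω_n`: a permutation of `{1, …, n}` whose first entry is `1`
and which avoids the bivincular pattern `ω`. -/
def InOmega {n : ℕ} (p : Fin n → ℕ) : Prop :=
  IsPerm p ∧ (∀ h : 0 < n, p ⟨0, h⟩ = 1) ∧ ¬ ContainsOmega p

/-!
Standardization ranks the positions of `x` lexicographically by (value, position). When `x` has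
no flat steps, `x` and `st(x)` have the same ascent tops, and for a modified ascent sequence
these are the leftmost copies; hence `x i` is recovered from `p = st(x)` as the number of ascent
tops of `p` with value at most `p i` (`unstd p i`).

Conversely, for `p ∈ Ω_n`, avoiding `ω` says that every value `v` not sitting at an ascent top
has `v - 1` somewhere to its left. By induction, positions whose values lie between two
consecutive ascent-top values increase with the value, i.e. `p` orders positions exactly as
`y = unstd p` does lexicographically, so `st(y) = p`; the same facts make `y` primitive.
-/

open Finset

namespace Tuple

variable {α : Type*} [LinearOrder α] {n : ℕ}

def rank (f : Fin n → α) (i : Fin n) : ℕ := #{j | f j ≤ f i}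

variable {f : Fin n → α}

lemma rank_lt_rank_iff {i j : Fin n} : rank f i < rank f j ↔ f i < f j := by
  constructor
  · intro h
    by_contra! hji
    exact (card_le_card fun k hk => by simp_all [le_trans _ hji]).not_gt h
  · intro h
    refine card_lt_card ⟨fun k hk => by simp_all [le_trans _ h.le], fun hsub => ?_⟩
    simpa [h.not_ge] using hsub (mem_filter.2 ⟨mem_univ j, le_rfl⟩)

lemma one_le_rank (i : Fin n) : 1 ≤ rank f i :=
  card_pos.2 ⟨i, by simp⟩

lemma rank_le (i : Fin n) : rank f i ≤ n :=
  (card_filter_le _ _).trans_eq (card_fin n)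

lemma rank_congr {β : Type*} [LinearOrder β] {g : Fin n → β} (h : ∀ i j, f i < f j ↔ g i < g j) : rank f = rank g := by
  funext i
  simp only [rank, ← not_lt, h]

lemma isPerm_rank (hf : Function.Injective f) : IsPerm (rank f) := by
  have hinj : Function.Injective (rank f) := fun i j hij =>
    hf (le_antisymm (not_lt.1 fun h => (rank_lt_rank_iff.2 h).ne' hij)
      (not_lt.1 fun h => (rank_lt_rank_iff.2 h).ne hij))
  refine ⟨hinj, ?_⟩
  have himage : univ.image (rank f) = Icc 1 n := by
    refine eq_of_subset_of_card_le (fun v hv => ?_) ?_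
    · obtain ⟨i, -, rfl⟩ := mem_image.1 hv
      exact mem_Icc.2 ⟨one_le_rank i, rank_le i⟩
    · simp [card_image_of_injective _ hinj]
  simpa using congrArg (fun s : Finset ℕ => (s : Set ℕ)) himage

end Tuple

lemma IsPerm.mem_Icc {n : ℕ} {p : Fin n → ℕ} (hp : IsPerm p) (i : Fin n) : p i ∈ Set.Icc 1 n :=
  hp.2 ▸ Set.mem_range_self i

lemma IsPerm.rank_eq {n : ℕ} {p : Fin n → ℕ} (hp : IsPerm p) : Tuple.rank p = p := by
  funext i
  have hmap : (univ.filter fun j => p j ≤ p i).map ⟨p, hp.1⟩ = Icc 1 (p i) := by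
    ext v
    simp only [mem_map, mem_filter, mem_univ, true_and, Function.Embedding.coeFn_mk, Finset.mem_Icc]
    constructor
    · rintro ⟨j, hj, rfl⟩
      exact ⟨(hp.mem_Icc j).1, hj⟩
    · rintro ⟨h1, h2⟩
      have hv : v ∈ Set.range p := hp.2 ▸ ⟨h1, h2.trans (hp.mem_Icc i).2⟩
      obtain ⟨j, rfl⟩ := hv
      exact ⟨j, h2, rfl⟩
  rw [Tuple.rank, ← card_map ⟨p, hp.1⟩, hmap, Nat.card_Icc, Nat.add_sub_cancel]

section Standardization

variable {n : ℕ} {x : Fin n → ℕ}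

open Tuple

lemma std_eq_rank : Std x = rank fun i => toLex (x i, i) := by
  funext i
  rw [Std, rank, ← card_union_of_disjoint]
  · congr 1
    ext j
    simp [Prod.Lex.toLex_le_toLex, and_comm]
  · exact disjoint_filter.2 fun j _ h1 h2 => h1.ne h2.2

lemma std_lt_std_iff {i j : Fin n} : Std x i < Std x j ↔ x i < x j ∨ x i = x j ∧ i < j := by
  rw [std_eq_rank, rank_lt_rank_iff, Prod.Lex.toLex_lt_toLex]

lemma isPerm_std : IsPerm (Std x) :=
  std_eq_rank (x := x) ▸ isPerm_rank fun _ _ h => (Prod.ext_iff.1 (toLex.injective h)).2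

lemma std_eq_of_lt_iff {p : Fin n → ℕ} (hp : IsPerm p)
    (h : ∀ i j, p i < p j ↔ x i < x j ∨ x i = x j ∧ i < j) : Std x = p := by
  rw [← hp.rank_eq, rank_congr fun i j => (h i j).trans std_lt_std_iff.symm, isPerm_std.rank_eq]

end Standardization

section ModifiedAscent

variable {n : ℕ} {x : Fin n → ℕ}

lemma IsCayley.one_le (hx : IsCayley x) (i : Fin n) : 1 ≤ x i := by
  obtain ⟨k, -, hr⟩ := hx
  exact (hr ▸ Set.mem_range_self i : x i ∈ Set.Icc 1 k).1

lemma exists_mem_nub_eq (i : Fin n) : ∃ j ∈ Nub x, x j = x i := by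
  induction i using WellFoundedLT.induction with
  | _ i ih =>
    by_cases hi : i ∈ Nub x
    · exact ⟨i, hi, rfl⟩
    · simp only [Nub, Set.mem_ofPred_eq, not_forall, not_not] at hi
      obtain ⟨j, hji, hj⟩ := hi
      obtain ⟨k, hk, hkj⟩ := ih j hji
      exact ⟨k, hk, hkj.trans hj⟩

lemma injOn_nub : Set.InjOn x (Nub x) := by
  intro i hi j hj hij
  by_contra hne
  rcases lt_or_gt_of_ne hne with h | h
  · exact hj i h hij
  · exact hi j h hij.symm

open Classical in
lemma IsCayley.card_nub_le (hx : IsCayley x) (i : Fin n) :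
    #{j | j ∈ Nub x ∧ x j ≤ x i} = x i := by
  have himage : image x {j | j ∈ Nub x ∧ x j ≤ x i} = Icc 1 (x i) := by
    ext v
    simp only [mem_image, mem_filter, mem_univ, true_and, Finset.mem_Icc]
    constructor
    · rintro ⟨j, ⟨-, hj⟩, rfl⟩
      exact ⟨hx.one_le j, hj⟩
    · rintro ⟨h1, h2⟩
      obtain ⟨k, -, hr⟩ := hx
      have hi : x i ∈ Set.Icc 1 k := hr ▸ Set.mem_range_self i
      obtain ⟨i', rfl⟩ := hr.ge ⟨h1, h2.trans hi.2⟩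
      obtain ⟨j, hj, hji'⟩ := exists_mem_nub_eq i'
      exact ⟨j, ⟨hj, hji' ▸ h2⟩, hji'⟩
  have hinj : Set.InjOn x ↑(univ.filter fun j => j ∈ Nub x ∧ x j ≤ x i) :=
    injOn_nub.mono fun j hj => (mem_filter.1 hj).2.1
  rw [← card_image_of_injOn hinj, himage, Nat.card_Icc, Nat.add_sub_cancel]

lemma IsModasc.apply_zero (hx : IsModasc x) (h : 0 < n) : x ⟨0, h⟩ = 1 := by
  obtain ⟨k, -, hr⟩ := hx.1
  have h0 : x ⟨0, h⟩ ∈ Set.Icc 1 k := hr ▸ Set.mem_range_self _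
  obtain ⟨i, hi⟩ := hr.ge ⟨le_rfl, h0.1.trans h0.2⟩
  obtain ⟨j, hj, hji⟩ := exists_mem_nub_eq i
  -- the leftmost `1` is an ascent top, so nothing can precede it
  have hasc : j ∈ AscTops x := hx.2 ▸ hj
  have hj0 : (j : ℕ) = 0 := by
    by_contra hj0
    have hlt := hasc ⟨j - 1, by omega⟩ (by simp only; omega)
    have hle := hx.1.one_le ⟨j - 1, by omega⟩
    omega
  rw [← hi, ← hji, show j = ⟨0, h⟩ from Fin.ext hj0]

end ModifiedAscent

section StdOfPrim

variable {n : ℕ} {x : Fin n → ℕ}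

lemma std_lt_std_iff_of_ne {i j : Fin n} (h : x i ≠ x j) : Std x i < Std x j ↔ x i < x j := by
  simp [std_lt_std_iff, h]

lemma std_le_std_iff_of_mem_nub {i j : Fin n} (hj : j ∈ Nub x) :
    Std x j ≤ Std x i ↔ x j ≤ x i := by
  rw [← not_lt, ← not_lt, std_lt_std_iff, or_iff_left fun h => hj i h.2 h.1]

lemma ascTops_std (hx : NoFlat x) : AscTops (Std x) = AscTops x := by
  ext i
  refine forall_congr' fun j => imp_congr_right fun hji => ?_
  exact std_lt_std_iff_of_ne (hx j i hji.symm)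

lemma IsModasc.std_apply_zero (hx : IsModasc x) (h : 0 < n) : Std x ⟨0, h⟩ = 1 := by
  obtain ⟨j, hj⟩ : 1 ∈ Set.range (Std x) := isPerm_std.2 ▸ ⟨le_rfl, h⟩
  have hle : Std x ⟨0, h⟩ ≤ Std x j := by
    rw [← not_lt, std_lt_std_iff, hx.apply_zero h]
    rintro (hlt | ⟨-, hlt⟩)
    · exact (hx.1.one_le j).not_gt hlt
    · exact Nat.not_lt_zero _ hlt
  exact le_antisymm (hj ▸ hle) (isPerm_std.mem_Icc _).1

lemma IsPrim.not_containsOmega_std (hx : IsPrim x) : ¬ ContainsOmega (Std x) := by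
  rintro ⟨i, j, hi, hij, hdesc, hval⟩
  set i' : Fin n := ⟨i + 1, hi⟩
  have hdesc' : x i' < x i := (std_lt_std_iff_of_ne (hx.2 i i' rfl).symm).1 hdesc
  -- `i'` is a descent bottom, hence not a leftmost copy: the value `x i'` occurs earlier
  obtain ⟨k, hki, hk⟩ : ∃ k < i', x k = x i' := by
    have hnotasc : i' ∉ AscTops x := fun hasc => (hasc i rfl).not_gt hdesc'
    rw [hx.1.2] at hnotasc
    simpa [Nub] using hnotasc
  have hxj : x j < x i' := by
    rcases std_lt_std_iff.1 (show Std x j < Std x i' by omega) with h | ⟨-, h⟩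
    · exact h
    · exact absurd (Fin.lt_def.1 h) (by simp only [i']; omega)
  have h1 : Std x j < Std x k := std_lt_std_iff.2 (Or.inl (hk ▸ hxj))
  have h2 : Std x k < Std x i' := std_lt_std_iff.2 (Or.inr ⟨hk, hki⟩)
  omega

lemma IsPrim.inOmega_std (hx : IsPrim x) : InOmega (Std x) :=
  ⟨isPerm_std, hx.1.std_apply_zero, hx.not_containsOmega_std⟩

end StdOfPrim

section Unstd

open Classical

variable {n : ℕ} {p : Fin n → ℕ}

noncomputable def unstd (p : Fin n → ℕ) (i : Fin n) : ℕ := #{j | j ∈ AscTops p ∧ p j ≤ p i}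

lemma unstd_lt_unstd_iff {i j : Fin n} :
    unstd p i < unstd p j ↔ ∃ k ∈ AscTops p, p i < p k ∧ p k ≤ p j := by
  constructor
  · intro h
    by_contra! hno
    refine h.not_ge (card_le_card fun k hk => ?_)
    simp only [mem_filter, mem_univ, true_and] at hk ⊢
    exact ⟨hk.1, not_lt.1 fun hik => (hno k hk.1 hik).not_ge hk.2⟩
  · rintro ⟨k, hk, hik, hkj⟩
    refine card_lt_card ⟨fun l hl => ?_, fun hsub => ?_⟩
    · simp only [mem_filter, mem_univ, true_and] at hl ⊢
      exact ⟨hl.1, hl.2.trans (hik.le.trans hkj)⟩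
    · have hki := (mem_filter.1 (hsub (mem_filter.2 ⟨mem_univ k, hk, hkj⟩))).2.2
      exact hki.not_gt hik

lemma unstd_le_unstd {i j : Fin n} (h : p i ≤ p j) : unstd p i ≤ unstd p j :=
  not_lt.1 fun hlt => by
    obtain ⟨k, -, hjk, hki⟩ := unstd_lt_unstd_iff.1 hlt
    omega

lemma unstd_le_card (i : Fin n) :
    unstd p i ≤ #{j | j ∈ AscTops p} :=
  card_le_card fun j hj => by simp_all

lemma injOn_unstd_ascTops (hp : Function.Injective p) : Set.InjOn (unstd p) (AscTops p) := by
  intro i hi j hj hij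
  by_contra hne
  rcases lt_trichotomy (p i) (p j) with h | h | h
  · exact (unstd_lt_unstd_iff.2 ⟨j, hj, h, le_rfl⟩).ne hij
  · exact hne (hp h)
  · exact (unstd_lt_unstd_iff.2 ⟨i, hi, h, le_rfl⟩).ne' hij

end Unstd

namespace InOmega

open Classical

variable {n : ℕ} {p : Fin n → ℕ} (hp : InOmega p)
include hp

lemma exists_lt_apply_add_one_eq {i : Fin n} (hi : i ∉ AscTops p) :
    ∃ j < i, p j + 1 = p i := by
  obtain ⟨i', hi'i, hdesc⟩ : ∃ i' : Fin n, (i' : ℕ) + 1 = i ∧ p i < p i' := by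
    simp only [AscTops, Set.mem_ofPred_eq, not_forall, not_lt] at hi
    obtain ⟨i', hi'i, hle⟩ := hi
    exact ⟨i', hi'i, hle.lt_of_ne fun h => by simp [hp.1.1 h] at hi'i⟩
  have hi1 : p i ≠ 1 := fun h => by
    have := congrArg Fin.val (hp.1.1 (h.trans (hp.2.1 i.pos).symm))
    simp only at this
    omega
  obtain ⟨hpi1, hpin⟩ := hp.1.mem_Icc i
  obtain ⟨j, hj⟩ : p i - 1 ∈ Set.range p := hp.1.2 ▸ ⟨by omega, by omega⟩
  -- were `p i - 1` to the right of `i`, the positions `i - 1, i, j` would form an `ω`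
  have hi' : (⟨i' + 1, by omega⟩ : Fin n) = i := Fin.ext hi'i
  refine ⟨j, lt_of_not_ge fun hij => hp.2.2 ⟨i', j, hi'i ▸ i.isLt, ?_, ?_, ?_⟩, by omega⟩
  · have : i ≠ j := by rintro rfl; omega
    have := Fin.lt_def.1 (hij.lt_of_ne this)
    omega
  · rwa [hi']
  · rw [hi', hj]
    omega

lemma lt_of_unstd_eq {i j : Fin n} (hlt : p i < p j) (heq : unstd p i = unstd p j) : i < j := by
  obtain ⟨m, hm⟩ : ∃ m, p j = m := ⟨_, rfl⟩
  induction m using Nat.strong_induction_on generalizing j with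
  | _ m ih =>
    have hj : j ∉ AscTops p := fun hj => (unstd_lt_unstd_iff.2 ⟨j, hj, hlt, le_rfl⟩).ne heq
    obtain ⟨j', hj'j, hj'⟩ := hp.exists_lt_apply_add_one_eq hj
    rcases (Nat.le_of_lt_succ (hj' ▸ hlt : p i < p j' + 1)).lt_or_eq with hij' | hij'
    · have heq' : unstd p i = unstd p j' :=
        le_antisymm (unstd_le_unstd hij'.le) (heq ▸ unstd_le_unstd (by omega))
      exact (ih _ (by omega) hij' heq' rfl).trans hj'j
    · exact hp.1.1 hij' ▸ hj'j

lemma lt_iff_unstd {i j : Fin n} :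
    p i < p j ↔ unstd p i < unstd p j ∨ unstd p i = unstd p j ∧ i < j := by
  constructor
  · intro h
    rcases (unstd_le_unstd h.le).lt_or_eq with hlt | heq
    · exact Or.inl hlt
    · exact Or.inr ⟨heq, hp.lt_of_unstd_eq h heq⟩
  · rintro (h | ⟨heq, hij⟩)
    · obtain ⟨k, -, hik, hkj⟩ := unstd_lt_unstd_iff.1 h
      exact hik.trans_le hkj
    · rcases lt_trichotomy (p i) (p j) with h | h | h
      · exact h
      · exact absurd (hp.1.1 h) hij.ne
      · exact absurd (hp.lt_of_unstd_eq h heq.symm) hij.not_gt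

lemma std_unstd : Std (unstd p) = p :=
  std_eq_of_lt_iff hp.1 fun _ _ => hp.lt_iff_unstd

lemma noFlat_unstd : NoFlat (unstd p) := by
  intro i j hij heq
  have hlt : p i < p j := hp.lt_iff_unstd.2 (Or.inr ⟨heq, Fin.lt_def.2 (by omega)⟩)
  have hj : j ∈ AscTops p := fun k hk => (Fin.ext (by omega) : k = i) ▸ hlt
  exact (unstd_lt_unstd_iff.2 ⟨j, hj, hlt, le_rfl⟩).ne heq

lemma ascTops_unstd : AscTops (unstd p) = AscTops p := by
  rw [← ascTops_std hp.noFlat_unstd, hp.std_unstd]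

lemma nub_unstd : Nub (unstd p) = AscTops p := by
  ext i
  constructor
  · intro hi
    by_contra hni
    obtain ⟨j, hji, hj⟩ := hp.exists_lt_apply_add_one_eq hni
    refine hi j hji (le_antisymm (unstd_le_unstd (by omega)) (not_lt.1 fun h => hni ?_))
    obtain ⟨k, hk, hjk, hki⟩ := unstd_lt_unstd_iff.1 h
    exact hp.1.1 (le_antisymm hki (by omega)) ▸ hk
  · intro hi j hji heq
    have hlt : p j < p i := hp.lt_iff_unstd.2 (Or.inr ⟨heq, hji⟩)
    exact (unstd_lt_unstd_iff.2 ⟨i, hi, hlt, le_rfl⟩).ne heq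

lemma one_le_unstd (i : Fin n) : 1 ≤ unstd p i :=
  card_pos.2 ⟨⟨0, i.pos⟩, mem_filter.2 ⟨mem_univ _, fun j hj => by simp at hj,
    (hp.2.1 i.pos).trans_le (hp.1.mem_Icc i).1⟩⟩

lemma isCayley_unstd : IsCayley (unstd p) := by
  set A : Finset (Fin n) := {j | j ∈ AscTops p}
  have himage : A.image (unstd p) = Icc 1 #A := by
    refine eq_of_subset_of_card_le (fun v hv => ?_) ?_
    · obtain ⟨a, -, rfl⟩ := mem_image.1 hv
      exact Finset.mem_Icc.2 ⟨hp.one_le_unstd a, unstd_le_card a⟩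
    · rw [card_image_of_injOn ((injOn_unstd_ascTops hp.1.1).mono (by simp [A])), Nat.card_Icc,
        Nat.add_sub_cancel]
  refine ⟨#A, (card_le_univ A).trans_eq (card_fin n), Set.Subset.antisymm ?_ ?_⟩
  · rintro _ ⟨i, rfl⟩
    exact ⟨hp.one_le_unstd i, unstd_le_card i⟩
  · rw [← coe_Icc, ← himage, coe_image]
    exact Set.image_subset_range _ _

lemma isPrim_unstd : IsPrim (unstd p) :=
  ⟨⟨hp.isCayley_unstd, by rw [hp.ascTops_unstd, hp.nub_unstd]⟩, hp.noFlat_unstd⟩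

end InOmega

open Classical in
lemma IsPrim.unstd_std {n : ℕ} {x : Fin n → ℕ} (hx : IsPrim x) : unstd (Std x) = x := by
  funext i
  rw [← hx.1.1.card_nub_le i, unstd, ascTops_std hx.2, hx.1.2]
  congr 1
  ext j
  simp only [mem_filter, mem_univ, true_and]
  exact and_congr_right std_le_std_iff_of_mem_nub

/-- Standardization is a bijection from `Prim_n` onto `Ω_n`. -/
theorem std_bijOn_prim_Omega (n : ℕ) :
    Set.BijOn (fun x => Std x) {x : Fin n → ℕ | IsPrim x}
      {p : Fin n → ℕ | InOmega p} :=
  Set.InvOn.bijOn ⟨fun _ hx => IsPrim.unstd_std hx, fun _ hp => InOmega.std_unstd hp⟩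
    (fun _ hx => IsPrim.inOmega_std hx) (fun _ hp => InOmega.isPrim_unstd hp)
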